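/- Let n ≥ 2, z : Fin n → ℝ, y : Fin n with z y = max_i z i, and β ≥ 0. Define the true-class gradient rescaling factor γ_y = ((∑_{i ≠ y} exp (β (z i))) · (∑_i exp (z i))) / ((∑_i exp (β (z i))) · (∑_{i ≠ y} exp (z i))). Then γ_y ≤ n · exp((1 - β) · (z y - M') + (M' - m)), where m = min_i z i and M' = max_{i ≠ y} z i. -/
import Mathlib


open Real Finset

/-- Upper bound on the true-class gradient rescaling factor `γ_y`:
`γ_y ≤ n * exp((1 - β)(z y - M') + (M' - m))` where `m = min_i z i` and
`M' = max_{i ≠ y} z i`. -/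
theorem gamma_true_class_upper_bound (n : ℕ) (hn : 2 ≤ n) (z : Fin n → ℝ) (y : Fin n)
    (hy : z y = Finset.univ.sup' (Finset.univ_nonempty_iff.mpr ⟨y⟩) z)
    (β : ℝ) (hβ : 0 ≤ β) (γ m M' : ℝ)
    (hγ : γ = ((∑ i ∈ Finset.univ.erase y, Real.exp (β * z i)) * ∑ i, Real.exp (z i)) /
      ((∑ i, Real.exp (β * z i)) * ∑ i ∈ Finset.univ.erase y, Real.exp (z i)))
    (hm : m = Finset.univ.inf' (Finset.univ_nonempty_iff.mpr ⟨y⟩) z)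
    (hM' : M' = (Finset.univ.erase y).sup'
      (by rw [← Finset.card_pos, Finset.card_erase_of_mem (Finset.mem_univ y),
        Finset.card_univ, Fintype.card_fin]; omega) z) :
    γ ≤ (n : ℝ) * Real.exp ((1 - β) * (z y - M') + (M' - m)) := by
  have hcard : (Finset.univ.erase y).card = n - 1 := by
    rw [Finset.card_erase_of_mem (Finset.mem_univ y), Finset.card_univ, Fintype.card_fin]
  have hn1 : (0:ℝ) < (n:ℝ) - 1 := by
    have : (2:ℝ) ≤ (n:ℝ) := by exact_mod_cast hn
    linarith
  have hcardR : ((Finset.univ.erase y).card : ℝ) = (n:ℝ) - 1 := by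
    rw [hcard]; push_cast [Nat.cast_sub (by omega : 1 ≤ n)]; ring
  -- bounds on coordinates
  have hzy : ∀ i : Fin n, z i ≤ z y := fun i => hy ▸ Finset.le_sup' z (Finset.mem_univ i)
  have hzm : ∀ i : Fin n, m ≤ z i := fun i => hm ▸ Finset.inf'_le z (Finset.mem_univ i)
  have hzM' : ∀ i ∈ Finset.univ.erase y, z i ≤ M' := fun i hi => hM' ▸ Finset.le_sup' z hi
  -- bounds on sums
  have hA : (∑ i ∈ Finset.univ.erase y, Real.exp (β * z i)) ≤ ((n:ℝ) - 1) * Real.exp (β * M') := by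
    calc (∑ i ∈ Finset.univ.erase y, Real.exp (β * z i))
        ≤ ∑ _i ∈ Finset.univ.erase y, Real.exp (β * M') := by
          apply Finset.sum_le_sum
          intro i hi
          exact Real.exp_le_exp.mpr (mul_le_mul_of_nonneg_left (hzM' i hi) hβ)
      _ = ((n:ℝ) - 1) * Real.exp (β * M') := by
          rw [Finset.sum_const, nsmul_eq_mul, hcardR]
  have hB : (∑ i, Real.exp (z i)) ≤ (n:ℝ) * Real.exp (z y) := by
    calc (∑ i, Real.exp (z i)) ≤ ∑ _i : Fin n, Real.exp (z y) := by
          apply Finset.sum_le_sum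
          intro i _
          exact Real.exp_le_exp.mpr (hzy i)
      _ = (n:ℝ) * Real.exp (z y) := by
          rw [Finset.sum_const, nsmul_eq_mul, Finset.card_univ, Fintype.card_fin]
  have hC : Real.exp (β * z y) ≤ ∑ i, Real.exp (β * z i) :=
    Finset.single_le_sum (f := fun i => Real.exp (β * z i)) (fun i _ => (Real.exp_pos _).le) (Finset.mem_univ y)
  have hD : ((n:ℝ) - 1) * Real.exp m ≤ ∑ i ∈ Finset.univ.erase y, Real.exp (z i) := by
    calc ((n:ℝ) - 1) * Real.exp m = ∑ _i ∈ Finset.univ.erase y, Real.exp m := by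
          rw [Finset.sum_const, nsmul_eq_mul, hcardR]
      _ ≤ ∑ i ∈ Finset.univ.erase y, Real.exp (z i) := by
          apply Finset.sum_le_sum
          intro i _
          exact Real.exp_le_exp.mpr (hzm i)
  have hApos : 0 ≤ ∑ i ∈ Finset.univ.erase y, Real.exp (β * z i) :=
    Finset.sum_nonneg fun i _ => (Real.exp_pos _).le
  have hBpos : 0 ≤ ∑ i, Real.exp (z i) := Finset.sum_nonneg fun i _ => (Real.exp_pos _).le
  have hden : 0 < Real.exp (β * z y) * (((n:ℝ) - 1) * Real.exp m) :=
    mul_pos (Real.exp_pos _) (mul_pos hn1 (Real.exp_pos _))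
  have key : γ ≤ (((n:ℝ) - 1) * Real.exp (β * M') * ((n:ℝ) * Real.exp (z y))) /
      (Real.exp (β * z y) * (((n:ℝ) - 1) * Real.exp m)) := by
    rw [hγ]
    exact div_le_div₀ (by positivity) (mul_le_mul hA hB hBpos (by positivity)) hden
      (mul_le_mul hC hD (by positivity) (Finset.sum_nonneg fun i _ => (Real.exp_pos _).le))
  calc γ ≤ (((n:ℝ) - 1) * Real.exp (β * M') * ((n:ℝ) * Real.exp (z y))) /
      (Real.exp (β * z y) * (((n:ℝ) - 1) * Real.exp m)) := key
    _ = (n : ℝ) * Real.exp ((1 - β) * (z y - M') + (M' - m)) := by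
        have he : (1 - β) * (z y - M') + (M' - m) = (β * M' + z y) - (β * z y + m) := by ring
        rw [he, Real.exp_sub, Real.exp_add, Real.exp_add]
        field_simp
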